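/- Let S be a real symmetric positive definite n×n matrix, let Δ be a diagonal n×n matrix with strictly positive diagonal entries, and set M := Δ S Δ⁻¹. Let X = (X₁,…,Xₙ) be a random vector with values in [0,∞)ⁿ such that for every d ∈ ℝⁿ with all dᵢ ≥ 0, E[exp(−Σᵢ dᵢXᵢ)] = det(M)/det(D + M), where D is the diagonal matrix with diagonal entries d₁,…,dₙ. Then X has the same distribution as the random vector (½(η₁² + η̃₁²),…,½(ηₙ² + η̃ₙ²)), where η and η̃ are independent random vectors each distributed as the centered multivariate Gaussian N(0, S⁻¹) on ℝⁿ. -/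

import Mathlib

/-!
Both laws live on the nonnegative orthant, so it suffices to compare their Laplace transforms
`d ↦ E exp (-∑ dᵢ Xᵢ)` at `d ≥ 0`. Conjugation by the diagonal `Δ` commutes with adding `D`, so
`det M / det (D + M) = det S / det (S + D)`. For `η ~ N(0, S⁻¹)`, multiplying the density by
`exp (-½ ηᵀ D η)` turns the precision matrix `S` into `S + D`, whence
`E exp (-½ ηᵀ D η) = √(det S / det (S + D))`, and the independent copy `η̃` squares this.
Laplace transforms determine laws on the orthant: under `tᵢ = exp (-xᵢ)` their values at integer
points become moments of laws on the cube `[0,1]ⁿ`, and polynomials are dense in `C([0,1]ⁿ)`.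
-/

open MeasureTheory ProbabilityTheory Matrix

/-- The centered multivariate Gaussian measure on `ℝⁿ` with (positive definite)
covariance matrix `S`, defined via its density with respect to Lebesgue measure. -/
noncomputable def multivariateGaussian {n : ℕ} (S : Matrix (Fin n) (Fin n) ℝ) :
    Measure (Fin n → ℝ) :=
  volume.withDensity fun x =>
    ENNReal.ofReal ((Real.sqrt ((2 * Real.pi) ^ n * S.det))⁻¹ *
      Real.exp (-(x ⬝ᵥ S⁻¹.mulVec x) / 2))

section GaussianIntegral

variable {ι : Type*} [Fintype ι]

lemma exp_neg_dotProduct_self_div_two_eq_prod (y : ι → ℝ) :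
    Real.exp (-(y ⬝ᵥ y) / 2) = ∏ i, Real.exp (-(1 / 2) * y i ^ 2) := by
  rw [← Real.exp_sum, dotProduct, ← Finset.sum_neg_distrib, Finset.sum_div]
  congr 1
  exact Finset.sum_congr rfl fun i _ => by ring

lemma integral_exp_neg_dotProduct_self_div_two :
    ∫ y : ι → ℝ, Real.exp (-(y ⬝ᵥ y) / 2) = Real.sqrt ((2 * Real.pi) ^ Fintype.card ι) := by
  simp_rw [exp_neg_dotProduct_self_div_two_eq_prod]
  rw [volume_pi, integral_fintype_prod_eq_pow (f := fun x : ℝ => Real.exp (-(1 / 2) * x ^ 2)),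
    integral_gaussian, eq_comm, Real.sqrt_eq_iff_eq_sq (by positivity) (by positivity), ← pow_mul,
    mul_comm (Fintype.card ι), pow_mul, Real.sq_sqrt (by positivity)]
  ring

variable [DecidableEq ι]

lemma Matrix.PosDef.exists_eq_transpose_mul_self {A : Matrix ι ι ℝ} (hA : A.PosDef) :
    ∃ B : Matrix ι ι ℝ, A = Bᵀ * B := by
  open scoped MatrixOrder in
  exact CStarAlgebra.nonneg_iff_eq_star_mul_self.mp hA.posSemidef.nonneg

lemma integral_exp_neg_dotProduct_mulVec_div_two {A : Matrix ι ι ℝ} (hA : A.PosDef) :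
    ∫ x : ι → ℝ, Real.exp (-(x ⬝ᵥ A *ᵥ x) / 2) =
      Real.sqrt ((2 * Real.pi) ^ Fintype.card ι / A.det) := by
  obtain ⟨B, rfl⟩ := hA.exists_eq_transpose_mul_self
  have hB : B.det ≠ 0 := fun h => by simpa [det_mul, h] using hA.det_pos
  have hcomp : (fun x : ι → ℝ => Real.exp (-(x ⬝ᵥ (Bᵀ * B) *ᵥ x) / 2)) =
      fun x => Real.exp (-(toLin' B x ⬝ᵥ toLin' B x) / 2) := by
    simp [← mulVec_mulVec, dotProduct_mulVec, vecMul_transpose]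
  have hcont : Continuous fun y : ι → ℝ => Real.exp (-(y ⬝ᵥ y) / 2) := by fun_prop
  rw [hcomp, ← integral_map (LinearMap.continuous_on_pi _).aemeasurable
      hcont.aestronglyMeasurable, Real.map_matrix_volume_pi_eq_smul_volume_pi hB,
    integral_smul_measure, integral_exp_neg_dotProduct_self_div_two, det_mul, det_transpose,
    ENNReal.toReal_ofReal (by positivity), smul_eq_mul, abs_inv, ← Real.sqrt_sq_eq_abs,
    ← Real.sqrt_inv, ← Real.sqrt_mul (by positivity)]
  congr 1
  field_simp

end GaussianIntegral

section MultivariateGaussian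

variable {n : ℕ} {C : Matrix (Fin n) (Fin n) ℝ}

lemma integral_multivariateGaussian (g : (Fin n → ℝ) → ℝ) :
    ∫ x, g x ∂multivariateGaussian C = (Real.sqrt ((2 * Real.pi) ^ n * C.det))⁻¹ *
      ∫ x, Real.exp (-(x ⬝ᵥ C⁻¹ *ᵥ x) / 2) * g x := by
  have hdens : Measurable fun x : Fin n → ℝ => (Real.sqrt ((2 * Real.pi) ^ n * C.det))⁻¹ *
      Real.exp (-(x ⬝ᵥ C⁻¹ *ᵥ x) / 2) := by fun_prop
  rw [_root_.multivariateGaussian, integral_withDensity_eq_integral_toReal_smul₀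
    hdens.ennreal_ofReal.aemeasurable (ae_of_all _ fun _ => ENNReal.ofReal_lt_top),
    ← integral_const_mul]
  congr 1 with x
  rw [ENNReal.toReal_ofReal (by positivity), smul_eq_mul, mul_assoc]

lemma integral_exp_neg_sum_mul_sq_div_two_multivariateGaussian (hC : C.PosDef)
    {d : Fin n → ℝ} (hd : ∀ i, 0 ≤ d i) :
    ∫ x, Real.exp (-(∑ i, d i * x i ^ 2) / 2) ∂multivariateGaussian C =
      Real.sqrt (C⁻¹.det / (C⁻¹ + diagonal d).det) := by
  have hCd : (C⁻¹ + diagonal d).PosDef :=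
    hC.inv.add_posSemidef (posSemidef_diagonal_iff.mpr hd)
  have hexp : ∀ x : Fin n → ℝ, Real.exp (-(x ⬝ᵥ C⁻¹ *ᵥ x) / 2) *
      Real.exp (-(∑ i, d i * x i ^ 2) / 2) = Real.exp (-(x ⬝ᵥ (C⁻¹ + diagonal d) *ᵥ x) / 2) := by
    intro x
    have hdiag : x ⬝ᵥ diagonal d *ᵥ x = ∑ i, d i * x i ^ 2 :=
      Finset.sum_congr rfl fun i _ => by rw [mulVec_diagonal]; ring
    rw [← Real.exp_add, add_mulVec, dotProduct_add, hdiag]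
    ring_nf
  simp_rw [integral_multivariateGaussian, hexp]
  rw [integral_exp_neg_dotProduct_mulVec_div_two hCd, Fintype.card_fin,
    det_nonsing_inv, Ring.inverse_eq_inv', ← Real.sqrt_inv,
    ← Real.sqrt_mul' _ (div_nonneg (by positivity) hCd.det_pos.le)]
  have hC₀ := hC.det_pos.ne'
  congr 1
  field_simp

lemma isProbabilityMeasure_multivariateGaussian (hC : C.PosDef) :
    IsProbabilityMeasure (multivariateGaussian C) := by
  have h := integral_exp_neg_sum_mul_sq_div_two_multivariateGaussian hC (d := 0) fun _ => le_rfl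
  simp only [Pi.zero_apply, zero_mul, Finset.sum_const_zero, neg_zero, zero_div, Real.exp_zero,
    integral_const, smul_eq_mul, mul_one] at h
  rw [show diagonal (0 : Fin n → ℝ) = 0 from diagonal_zero, add_zero, div_self hC.inv.det_pos.ne',
    Real.sqrt_one] at h
  exact ⟨(ENNReal.toReal_eq_one_iff _).mp h⟩

lemma integral_exp_neg_sum_mul_half_sq_add_sq_multivariateGaussian_prod (hC : C.PosDef)
    {d : Fin n → ℝ} (hd : ∀ i, 0 ≤ d i) :
    ∫ p, Real.exp (-∑ i, d i * ((p.1 i ^ 2 + p.2 i ^ 2) / 2))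
        ∂(multivariateGaussian C).prod (multivariateGaussian C) =
      C⁻¹.det / (C⁻¹ + diagonal d).det := by
  have hCd : (C⁻¹ + diagonal d).PosDef :=
    hC.inv.add_posSemidef (posSemidef_diagonal_iff.mpr hd)
  have hsplit : ∀ p : (Fin n → ℝ) × (Fin n → ℝ),
      Real.exp (-∑ i, d i * ((p.1 i ^ 2 + p.2 i ^ 2) / 2)) =
        Real.exp (-(∑ i, d i * p.1 i ^ 2) / 2) * Real.exp (-(∑ i, d i * p.2 i ^ 2) / 2) := by
    intro p
    rw [← Real.exp_add, neg_div, neg_div, ← neg_add, Finset.sum_div, Finset.sum_div,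
      ← Finset.sum_add_distrib]
    exact congrArg _ (congrArg _ (Finset.sum_congr rfl fun i _ => by ring))
  have := isProbabilityMeasure_multivariateGaussian hC
  simp_rw [hsplit]
  rw [integral_prod_mul (f := fun x : Fin n → ℝ => Real.exp (-(∑ i, d i * x i ^ 2) / 2))
      (g := fun x : Fin n → ℝ => Real.exp (-(∑ i, d i * x i ^ 2) / 2)),
    integral_exp_neg_sum_mul_sq_div_two_multivariateGaussian hC hd,
    Real.mul_self_sqrt (div_nonneg hC.inv.det_pos.le hCd.det_pos.le)]

end MultivariateGaussian

section CompactSpace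

variable {X : Type*} [TopologicalSpace X] [CompactSpace X] [MeasurableSpace X]

lemma ContinuousMap.integrable [OpensMeasurableSpace X] (μ : Measure X) [IsFiniteMeasure μ]
    (g : C(X, ℝ)) : Integrable g μ :=
  (BoundedContinuousFunction.mkOfCompact g).integrable μ

lemma ContinuousMap.continuous_integral [BorelSpace X] (μ : Measure X) [IsFiniteMeasure μ] :
    Continuous fun g : C(X, ℝ) => ∫ x, g x ∂μ := by
  have h : (fun g : C(X, ℝ) => ∫ x, g x ∂μ) = fun g => ∫ x, ContinuousMap.toLp 1 μ ℝ g x ∂μ :=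
    funext fun g => integral_congr_ae (ContinuousMap.coeFn_toLp μ g).symm
  rw [h]
  exact MeasureTheory.continuous_integral.comp (ContinuousMap.toLp 1 μ ℝ).continuous

theorem MeasureTheory.Measure.ext_of_forall_mem_subalgebra_integral_eq_of_compactSpace
    [TopologicalSpace.PseudoMetrizableSpace X] [BorelSpace X]
    {μ ν : Measure X} [IsFiniteMeasure μ] [IsFiniteMeasure ν] {A : Subalgebra ℝ C(X, ℝ)}
    (hA : A.SeparatesPoints) (h : ∀ g ∈ A, ∫ x, g x ∂μ = ∫ x, g x ∂ν) : μ = ν := by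
  have hclosed : IsClosed {g : C(X, ℝ) | ∫ x, g x ∂μ = ∫ x, g x ∂ν} :=
    isClosed_eq (ContinuousMap.continuous_integral μ) (ContinuousMap.continuous_integral ν)
  have hdense : closure (A : Set C(X, ℝ)) = Set.univ := by
    rw [← Subalgebra.topologicalClosure_coe,
      ContinuousMap.subalgebra_topologicalClosure_eq_top_of_separatesPoints A hA,
      Algebra.coe_top]
  refine ext_of_forall_integral_eq_of_IsFiniteMeasure fun f => ?_
  exact closure_minimal h hclosed (hdense ▸ Set.mem_univ f.toContinuousMap)

end CompactSpace

section UnitCube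

open unitInterval

variable {ι : Type*} [Fintype ι]

theorem MeasureTheory.Measure.ext_of_forall_integral_prod_pow_eq {μ ν : Measure (ι → I)}
    [IsFiniteMeasure μ] [IsFiniteMeasure ν]
    (h : ∀ k : ι → ℕ, ∫ t, ∏ i, (t i : ℝ) ^ k i ∂μ = ∫ t, ∏ i, (t i : ℝ) ^ k i ∂ν) :
    μ = ν := by
  let coord : ι → C(ι → I, ℝ) := fun i => ⟨fun t => t i, by fun_prop⟩
  refine Measure.ext_of_forall_mem_subalgebra_integral_eq_of_compactSpace
    (A := Algebra.adjoin ℝ (Set.range coord)) ?_ ?_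
  · intro s t hst
    obtain ⟨i, hi⟩ := Function.ne_iff.mp hst
    exact ⟨coord i, ⟨coord i, Algebra.subset_adjoin ⟨i, rfl⟩, rfl⟩, fun h => hi (Subtype.ext h)⟩
  · rw [Algebra.adjoin_range_eq_range_aeval]
    rintro _ ⟨p, rfl⟩
    induction p using MvPolynomial.induction_on' with
    | monomial u a =>
      simp only [AlgHom.toRingHom_eq_coe, RingHom.coe_coe, MvPolynomial.aeval_monomial, pow_zero,
        implies_true, Finsupp.prod_fintype, ContinuousMap.mul_apply, algebraMap_apply, smul_eq_mul,
        mul_one, ContinuousMap.coe_prod, ContinuousMap.coe_pow, Finset.prod_apply, Pi.pow_apply]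
      rw [integral_const_mul, integral_const_mul]
      exact congrArg (a * ·) (h u)
    | add p q hp hq =>
      simp only [map_add, ContinuousMap.add_apply]
      rw [integral_add (ContinuousMap.integrable _ _) (ContinuousMap.integrable _ _),
        integral_add (ContinuousMap.integrable _ _) (ContinuousMap.integrable _ _), hp, hq]

theorem MeasureTheory.Measure.ext_of_laplace_eq {μ ν : Measure (ι → ℝ)}
    [IsFiniteMeasure μ] [IsFiniteMeasure ν]
    (hμ : ∀ᵐ x ∂μ, ∀ i, 0 ≤ x i) (hν : ∀ᵐ x ∂ν, ∀ i, 0 ≤ x i)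
    (h : ∀ d : ι → ℝ, (∀ i, 0 ≤ d i) →
      ∫ x, Real.exp (-∑ i, d i * x i) ∂μ = ∫ x, Real.exp (-∑ i, d i * x i) ∂ν) :
    μ = ν := by
  -- `projIcc` only makes `T` a continuous map into the cube; on the orthant `T x = exp (-x)`.
  let T : (ι → ℝ) → ι → I := fun x i => Set.projIcc 0 1 zero_le_one (Real.exp (-x i))
  let U : (ι → I) → ι → ℝ := fun t i => -Real.log (t i)
  have hTc : Continuous T := by fun_prop
  have hUm : Measurable U := by fun_prop
  have hT : ∀ {x : ι → ℝ}, (∀ i, 0 ≤ x i) → ∀ i, (T x i : ℝ) = Real.exp (-x i) := fun hx i =>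
    congrArg Subtype.val (Set.projIcc_of_mem _
      ⟨(Real.exp_pos _).le, Real.exp_le_one_iff.mpr (neg_nonpos.mpr (hx i))⟩)
  have hmoment : ∀ {x : ι → ℝ}, (∀ i, 0 ≤ x i) → ∀ k : ι → ℕ,
      ∏ i, (T x i : ℝ) ^ k i = Real.exp (-∑ i, (k i : ℝ) * x i) := by
    intro x hx k
    simp_rw [hT hx, ← Real.exp_nat_mul, ← Real.exp_sum, ← Finset.sum_neg_distrib, mul_neg]
  have hinv : ∀ ρ : Measure (ι → ℝ), (∀ᵐ x ∂ρ, ∀ i, 0 ≤ x i) → (ρ.map T).map U = ρ := by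
    intro ρ hρ
    rw [Measure.map_map hUm hTc.measurable]
    refine (Measure.map_congr (hρ.mono fun x hx => ?_)).trans Measure.map_id
    change U (T x) = x
    funext i
    simp [U, hT hx]
  have hcube : μ.map T = ν.map T := by
    refine Measure.ext_of_forall_integral_prod_pow_eq fun k => ?_
    have hcont : Continuous fun t : ι → I => ∏ i, (t i : ℝ) ^ k i := by fun_prop
    rw [integral_map hTc.aemeasurable hcont.aestronglyMeasurable,
      integral_map hTc.aemeasurable hcont.aestronglyMeasurable,
      integral_congr_ae (hμ.mono fun x hx => hmoment hx k),
      integral_congr_ae (hν.mono fun x hx => hmoment hx k)]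
    exact h _ fun i => (k i).cast_nonneg
  rw [← hinv μ hμ, ← hinv ν hν, hcube]

end UnitCube

lemma Matrix.det_add_conj_eq_of_commute {R ι : Type*} [CommRing R] [Fintype ι] [DecidableEq ι]
    {D P N : Matrix ι ι R} (hP : IsUnit P) (hDP : Commute D P) :
    (D + P * N * P⁻¹).det = (D + N).det := by
  have hP' : IsUnit P.det := (isUnit_iff_isUnit_det P).mp hP
  rw [← det_conj hP (D + N), Matrix.mul_add, Matrix.add_mul, ← hDP.eq, Matrix.mul_assoc D,
    mul_nonsing_inv _ hP', Matrix.mul_one]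

lemma ae_map_forall_nonneg {Ω ι : Type*} [MeasurableSpace Ω] [Fintype ι] {P : Measure Ω}
    {X : Ω → ι → ℝ} (hXm : Measurable X) (hX0 : ∀ ω i, 0 ≤ X ω i) :
    ∀ᵐ x ∂P.map X, ∀ i, 0 ≤ x i :=
  (ae_map_iff hXm.aemeasurable (by measurability)).mpr (ae_of_all _ hX0)

theorem laplace_det_ratio_eq_sum_sq_gaussians {n : ℕ}
    (S : Matrix (Fin n) (Fin n) ℝ) (hS : S.PosDef)
    (δ : Fin n → ℝ) (hδ : ∀ i, 0 < δ i)
    (M : Matrix (Fin n) (Fin n) ℝ)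
    (hM : M = Matrix.diagonal δ * S * (Matrix.diagonal δ)⁻¹)
    {Ω : Type*} [MeasurableSpace Ω] (P : Measure Ω) [IsProbabilityMeasure P]
    (X : Ω → Fin n → ℝ) (hXm : Measurable X) (hX0 : ∀ ω i, 0 ≤ X ω i)
    (hlap : ∀ d : Fin n → ℝ, (∀ i, 0 ≤ d i) →
      ∫ ω, Real.exp (-(∑ i, d i * X ω i)) ∂P = M.det / (Matrix.diagonal d + M).det) :
    Measure.map X P =
      Measure.map (fun p : (Fin n → ℝ) × (Fin n → ℝ) => fun i => ((p.1 i) ^ 2 + (p.2 i) ^ 2) / 2)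
        ((multivariateGaussian S⁻¹).prod (multivariateGaussian S⁻¹)) := by
  have hΔ : IsUnit (diagonal δ) := by
    rw [isUnit_iff_isUnit_det, det_diagonal]
    exact (Finset.prod_pos fun i _ => hδ i).ne'.isUnit
  have hdet : ∀ d : Fin n → ℝ,
      M.det / (diagonal d + M).det = (S⁻¹)⁻¹.det / ((S⁻¹)⁻¹ + diagonal d).det := by
    intro d
    rw [nonsing_inv_nonsing_inv S hS.det_pos.ne'.isUnit, hM, det_conj hΔ,
      det_add_conj_eq_of_commute hΔ (commute_diagonal d δ), add_comm]
  have := isProbabilityMeasure_multivariateGaussian hS.inv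
  have hYm : Measurable fun p : (Fin n → ℝ) × (Fin n → ℝ) =>
      fun i => ((p.1 i) ^ 2 + (p.2 i) ^ 2) / 2 := by fun_prop
  refine Measure.ext_of_laplace_eq (ae_map_forall_nonneg hXm hX0)
    (ae_map_forall_nonneg hYm fun p i => by positivity) fun d hd => ?_
  have hL : Continuous fun x : Fin n → ℝ => Real.exp (-∑ i, d i * x i) := by fun_prop
  rw [integral_map hXm.aemeasurable hL.aestronglyMeasurable,
    integral_map hYm.aemeasurable hL.aestronglyMeasurable,
    hlap d hd, integral_exp_neg_sum_mul_half_sq_add_sq_multivariateGaussian_prod hS.inv hd, hdet]
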